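/- Suppose κ̄_d = κ̄_t = 0 and κ̄_m > 0 (isotropic target curvature on the cone axis). Then the reduced energy along equilibria, Û(θ) = U(κ_m*(θ), θ) with κ_m*(θ) = κ̄_m/(a² cos²θ + b² sin²θ + 1), satisfies Û'(θ) = κ̄_m²(b²−a²) sin 2θ / (2(a² cos²θ + b² sin²θ + 1)²). In particular, if a ≠ b the stationary points of Û in [0, 2π) are exactly θ ∈ {0, π/2, π, 3π/2}. -/

import Mathlib

/-! Substituting the minimiser κ* = κ̄/D, with D(θ) = a² cos² θ + b² sin² θ + 1, collapses the
energy to Û = κ̄²/2 − κ̄²/(2D), so Û' = κ̄² D'/(2D²) and D' = (b² − a²) sin 2θ. When a ≠ b the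
stationary points are therefore the zeros of sin 2θ. -/

open Real

lemma energy_at_minimizer (k a b c s : ℝ) (hD : a ^ 2 * c ^ 2 + b ^ 2 * s ^ 2 + 1 ≠ 0) :
    (k / (a ^ 2 * c ^ 2 + b ^ 2 * s ^ 2 + 1) - k) ^ 2 / 2
        + (k / (a ^ 2 * c ^ 2 + b ^ 2 * s ^ 2 + 1) * a * c) ^ 2 / 2
        + (k / (a ^ 2 * c ^ 2 + b ^ 2 * s ^ 2 + 1) * b * s) ^ 2 / 2 =
      k ^ 2 / 2 - k ^ 2 / 2 * (a ^ 2 * c ^ 2 + b ^ 2 * s ^ 2 + 1)⁻¹ := by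
  field_simp
  ring

lemma anisotropy_pos (a b θ : ℝ) : 0 < a ^ 2 * cos θ ^ 2 + b ^ 2 * sin θ ^ 2 + 1 := by
  positivity

lemma hasDerivAt_anisotropy (a b θ : ℝ) :
    HasDerivAt (fun t => a ^ 2 * cos t ^ 2 + b ^ 2 * sin t ^ 2 + 1)
      ((b ^ 2 - a ^ 2) * sin (2 * θ)) θ := by
  have hcos := ((hasDerivAt_cos θ).pow 2).const_mul (a ^ 2)
  have hsin := ((hasDerivAt_sin θ).pow 2).const_mul (b ^ 2)
  refine ((hcos.add hsin).add_const 1).congr_deriv ?_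
  rw [sin_two_mul]
  ring

lemma hasDerivAt_energy_at_minimizer (a b k θ : ℝ) :
    HasDerivAt
      (fun t => (k / (a ^ 2 * cos t ^ 2 + b ^ 2 * sin t ^ 2 + 1) - k) ^ 2 / 2
        + (k / (a ^ 2 * cos t ^ 2 + b ^ 2 * sin t ^ 2 + 1) * a * cos t) ^ 2 / 2
        + (k / (a ^ 2 * cos t ^ 2 + b ^ 2 * sin t ^ 2 + 1) * b * sin t) ^ 2 / 2)
      (k ^ 2 * (b ^ 2 - a ^ 2) * sin (2 * θ) /
        (2 * (a ^ 2 * cos θ ^ 2 + b ^ 2 * sin θ ^ 2 + 1) ^ 2)) θ := by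
  simp only [energy_at_minimizer k a b _ _ (anisotropy_pos a b _).ne']
  have hinv := (hasDerivAt_anisotropy a b θ).inv (anisotropy_pos a b θ).ne'
  refine ((hinv.const_mul (k ^ 2 / 2)).const_sub (k ^ 2 / 2)).congr_deriv ?_
  field_simp

lemma sep_Ico_sin_two_mul_eq_zero :
    {θ ∈ Set.Ico (0 : ℝ) (2 * π) | sin (2 * θ) = 0} = {0, π / 2, π, 3 * π / 2} := by
  ext θ
  simp only [Set.mem_Ico, Set.mem_insert_iff, Set.mem_singleton_iff]
  constructor
  · rintro ⟨⟨h0, h2π⟩, hsin⟩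
    obtain ⟨n, hn⟩ := sin_eq_zero_iff.mp hsin
    have hn_lo : (-1 : ℝ) < n := by nlinarith [pi_pos]
    have hn_hi : (n : ℝ) < 4 := by nlinarith [pi_pos]
    have : -1 < n := by exact_mod_cast hn_lo
    have : n < 4 := by exact_mod_cast hn_hi
    interval_cases n <;> push_cast at hn
    · left; linarith
    · right; left; linarith
    · right; right; left; linarith
    · right; right; right; linarith
  · have := pi_pos
    rintro (rfl | rfl | rfl | rfl) <;> refine ⟨⟨by positivity, by linarith⟩, ?_⟩
    · simp
    · rw [mul_div_cancel₀ π two_ne_zero, sin_pi]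
    · exact sin_two_pi
    · rw [show 2 * (3 * π / 2) = π + 2 * π by ring, sin_add_two_pi, sin_pi]

/-- Derivative of the reduced energy along equilibria and its stationary
points for the isotropic target curvature. -/
theorem reduced_energy_derivative_and_stationary_points
    (a b kbarm : ℝ) (ha : 0 < a) (hb : 0 < b) (hk : 0 < kbarm) :
    let U : ℝ → ℝ → ℝ := fun x t =>
      (x - kbarm) ^ 2 / 2 + (x * a * Real.cos t) ^ 2 / 2 + (x * b * Real.sin t) ^ 2 / 2
    let κmStar : ℝ → ℝ := fun t =>
      kbarm / (a ^ 2 * Real.cos t ^ 2 + b ^ 2 * Real.sin t ^ 2 + 1)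
    let Uhat : ℝ → ℝ := fun t => U (κmStar t) t
    (∀ θ : ℝ, deriv Uhat θ =
        kbarm ^ 2 * (b ^ 2 - a ^ 2) * Real.sin (2 * θ) /
          (2 * (a ^ 2 * Real.cos θ ^ 2 + b ^ 2 * Real.sin θ ^ 2 + 1) ^ 2)) ∧
      (a ≠ b →
        {θ ∈ Set.Ico (0 : ℝ) (2 * Real.pi) | deriv Uhat θ = 0} =
          {0, Real.pi / 2, Real.pi, 3 * Real.pi / 2}) := by
  intro U κmStar Uhat
  have hderiv : ∀ θ, deriv Uhat θ = kbarm ^ 2 * (b ^ 2 - a ^ 2) * sin (2 * θ) /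
      (2 * (a ^ 2 * cos θ ^ 2 + b ^ 2 * sin θ ^ 2 + 1) ^ 2) := fun θ =>
    (hasDerivAt_energy_at_minimizer a b kbarm θ).deriv
  refine ⟨hderiv, fun hab => ?_⟩
  have hsq : b ^ 2 - a ^ 2 ≠ 0 := sub_ne_zero.mpr fun h => hab ((sq_eq_sq₀ hb.le ha.le).mp h).symm
  have hstationary θ : deriv Uhat θ = 0 ↔ sin (2 * θ) = 0 := by
    rw [hderiv, div_eq_zero_iff, or_iff_left (by positivity), mul_eq_zero,
      or_iff_right (mul_ne_zero (by positivity) hsq)]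
  simp_rw [hstationary]
  exact sep_Ico_sin_two_mul_eq_zero
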